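/- arXiv:2003.09413 — 9 statements merged into one kernel-verified Lean document; each statement's English description precedes it below -/
import Mathlib

section
/- Let α and β be nonzero scalars with |α| ≥ |β|, and let {f_n}_{n=1}^∞ be a Bessel sequence in a complex Hilbert space H. Then {f_n}_{n=1}^∞ is complete in H if and only if {α f_n + β f_{n+1}}_{n=1}^∞ is complete in H. -/
/-!
A sequence in a Hilbert space is complete iff no nonzero vector is orthogonal to all its terms.
If `x` is orthogonal to every `α fₙ + β fₙ₊₁`, then `aₙ = ⟪x, fₙ⟫` satisfies `α aₙ + β aₙ₊₁ = 0`;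
as `‖β‖ ≤ ‖α‖` the moduli `‖aₙ‖` are nondecreasing, while the Bessel property makes `(aₙ)` square
summable and hence null, so `a = 0`. Conversely, a vector orthogonal to every `fₙ` is orthogonal to
their combinations.
-/

/-- A sequence `g` in a complex Hilbert space is a Bessel sequence. -/
def IsBessel {H : Type*} [NormedAddCommGroup H] [InnerProductSpace ℂ H]
    (g : ℕ → H) : Prop :=
  ∃ B : ℝ, 0 < B ∧ ∀ x : H,
    Summable (fun n => ‖(inner ℂ x (g n) : ℂ)‖ ^ 2) ∧
    ∑' n, ‖(inner ℂ x (g n) : ℂ)‖ ^ 2 ≤ B * ‖x‖ ^ 2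

/-- A sequence is complete if its closed linear span is the whole space,
i.e. its linear span is dense. -/
def IsComplete' {H : Type*} [NormedAddCommGroup H] [InnerProductSpace ℂ H]
    (g : ℕ → H) : Prop :=
  Dense (↑(Submodule.span ℂ (Set.range g)) : Set H)

open Filter Topology
open scoped InnerProductSpace

theorem mem_orthogonal_span_range_iff {𝕜 E ι : Type*} [RCLike 𝕜] [NormedAddCommGroup E]
    [InnerProductSpace 𝕜 E] (g : ι → E) (x : E) :
    x ∈ (Submodule.span 𝕜 (Set.range g))ᗮ ↔ ∀ i, ⟪x, g i⟫_𝕜 = 0 := by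
  rw [← Submodule.span_singleton_le_iff_mem, ← Submodule.isOrtho_iff_le, Submodule.isOrtho_span]
  simp

theorem isComplete'_iff_forall_inner_eq_zero {H : Type*} [NormedAddCommGroup H]
    [InnerProductSpace ℂ H] [CompleteSpace H] (g : ℕ → H) :
    IsComplete' g ↔ ∀ x : H, (∀ n, ⟪x, g n⟫_ℂ = 0) → x = 0 := by
  simp only [IsComplete', Submodule.dense_iff_topologicalClosure_eq_top,
    Submodule.topologicalClosure_eq_top_iff, Submodule.eq_bot_iff, mem_orthogonal_span_range_iff]

theorem IsBessel.tendsto_inner_atTop_zero {H : Type*} [NormedAddCommGroup H]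
    [InnerProductSpace ℂ H] {g : ℕ → H} (hg : IsBessel g) (x : H) :
    Tendsto (fun n => ⟪x, g n⟫_ℂ) atTop (𝓝 0) := by
  obtain ⟨B, -, hB⟩ := hg
  have hsq : Tendsto (fun n => ‖⟪x, g n⟫_ℂ‖ ^ 2) atTop (𝓝 0) := (hB x).1.tendsto_atTop_zero
  rw [tendsto_zero_iff_norm_tendsto_zero]
  simpa [Real.sqrt_sq (norm_nonneg _)] using hsq.sqrt

theorem norm_le_norm_succ_of_mul_add_mul_succ_eq_zero {𝕜 : Type*} [NormedDivisionRing 𝕜]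
    {α β : 𝕜} {a : ℕ → 𝕜} (hα : α ≠ 0) (hαβ : ‖β‖ ≤ ‖α‖)
    (hrec : ∀ n, α * a n + β * a (n + 1) = 0) (n : ℕ) : ‖a n‖ ≤ ‖a (n + 1)‖ := by
  have hnorm : ‖α‖ * ‖a n‖ = ‖β‖ * ‖a (n + 1)‖ := by
    rw [← norm_mul, ← norm_mul, eq_neg_of_add_eq_zero_left (hrec n), norm_neg]
  refine le_of_mul_le_mul_left ?_ (norm_pos_iff.mpr hα)
  rw [hnorm]
  exact mul_le_mul_of_nonneg_right hαβ (norm_nonneg _)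

theorem eq_zero_of_mul_add_mul_succ_eq_zero_of_tendsto {𝕜 : Type*} [NormedDivisionRing 𝕜]
    {α β : 𝕜} {a : ℕ → 𝕜} (hα : α ≠ 0) (hαβ : ‖β‖ ≤ ‖α‖)
    (hrec : ∀ n, α * a n + β * a (n + 1) = 0) (hlim : Tendsto a atTop (𝓝 0)) : a = 0 := by
  have hmono : Monotone fun n => ‖a n‖ :=
    monotone_nat_of_le_succ (norm_le_norm_succ_of_mul_add_mul_succ_eq_zero hα hαβ hrec)
  funext n
  exact norm_le_zero_iff.mp (hmono.ge_of_tendsto (tendsto_zero_iff_norm_tendsto_zero.mp hlim) n)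

theorem stmt1_general {H : Type*} [NormedAddCommGroup H] [InnerProductSpace ℂ H]
    [CompleteSpace H] (α β : ℂ) (hα : α ≠ 0) (hαβ : ‖β‖ ≤ ‖α‖)
    (f : ℕ → H) (hF : IsBessel f) :
    IsComplete' f ↔ IsComplete' (fun n => α • f n + β • f (n + 1)) := by
  simp only [isComplete'_iff_forall_inner_eq_zero, inner_add_right, inner_smul_right]
  refine ⟨fun hf x hx => hf x fun n => ?_, fun hg x hx => hg x fun n => by simp [hx]⟩
  exact congrFun (eq_zero_of_mul_add_mul_succ_eq_zero_of_tendsto hα hαβ hx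
    (hF.tendsto_inner_atTop_zero x)) n

theorem stmt1 {H : Type*} [NormedAddCommGroup H] [InnerProductSpace ℂ H]
    [CompleteSpace H] (α β : ℂ) (hα : α ≠ 0) (hβ : β ≠ 0) (hαβ : ‖β‖ ≤ ‖α‖)
    (f : ℕ → H) (hF : IsBessel f) :
    IsComplete' f ↔ IsComplete' (fun n => α • f n + β • f (n + 1)) :=
  stmt1_general α β hα hαβ f hF
end

section
/- Let {f_n}_{n=1}^∞ be a sequence in a complex Hilbert space H, let α be a nonzero scalar and β any scalar, and set M = {α f_n + β f_{n+1}}_{n=1}^∞ and N = {α f_n − β f_{n+1}}_{n=1}^∞. Then {f_n}_{n=1}^∞ is a frame for H if and only if the union family M ∪ N (the combined indexed family consisting of all elements α f_n + β f_{n+1} and all elements α f_n − β f_{n+1}) is a frame for H. -/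
/-- A family `g` indexed by `ι` in a complex Hilbert space is a frame. -/
def IsFrame {H : Type*} [NormedAddCommGroup H] [InnerProductSpace ℂ H]
    {ι : Type*} (g : ι → H) : Prop :=
  ∃ A B : ℝ, 0 < A ∧ 0 < B ∧ ∀ x : H,
    Summable (fun i => ‖(inner ℂ x (g i) : ℂ)‖ ^ 2) ∧
    A * ‖x‖ ^ 2 ≤ ∑' i, ‖(inner ℂ x (g i) : ℂ)‖ ^ 2 ∧
    ∑' i, ‖(inner ℂ x (g i) : ℂ)‖ ^ 2 ≤ B * ‖x‖ ^ 2

/-!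
The parallelogram law gives, for every `x`,
`|⟪x, α fₙ + β fₙ₊₁⟫|² + |⟪x, α fₙ - β fₙ₊₁⟫|² = 2 |α|² |⟪x, fₙ⟫|² + 2 |β|² |⟪x, fₙ₊₁⟫|²`.
Summing over `n`, the frame sum of `M ∪ N` at `x` lies between `2 |α|²` and `2 (|α|² + |β|²)`
times the frame sum of `f` at `x`, because the shifted sum `∑ |⟪x, fₙ₊₁⟫|²` is at most the
unshifted one. Two frame sums that are comparable up to positive constants define frames
simultaneously.
-/

open scoped InnerProductSpace

theorem norm_inner_add_sq_add_norm_inner_sub_sq {𝕜 E : Type*} [RCLike 𝕜] [NormedAddCommGroup E]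
    [InnerProductSpace 𝕜 E] (x y z : E) (a b : 𝕜) :
    ‖⟪x, a • y + b • z⟫_𝕜‖ ^ 2 + ‖⟪x, a • y - b • z⟫_𝕜‖ ^ 2 =
      2 * (‖a‖ ^ 2 * ‖⟪x, y⟫_𝕜‖ ^ 2 + ‖b‖ ^ 2 * ‖⟪x, z⟫_𝕜‖ ^ 2) := by
  have := parallelogram_law_with_norm 𝕜 (a * ⟪x, y⟫_𝕜) (b * ⟪x, z⟫_𝕜)
  rw [inner_add_right, inner_sub_right, inner_smul_right, inner_smul_right]
  simp only [norm_mul, mul_pow] at this ⊢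
  linarith

section PairedSums

variable {w : ℕ ⊕ ℕ → ℝ} {a : ℕ → ℝ} {p q : ℝ}

theorem summable_inl_and_inr_of_pair_add_eq (hw : ∀ i, 0 ≤ w i)
    (h : ∀ n, w (.inl n) + w (.inr n) = p * a n + q * a (n + 1)) (ha_sum : Summable a) :
    (Summable fun n => w (.inl n)) ∧ Summable fun n => w (.inr n) := by
  have hbound : Summable fun n => p * a n + q * a (n + 1) :=
    (ha_sum.mul_left p).add (((summable_nat_add_iff 1).2 ha_sum).mul_left q)
  exact ⟨hbound.of_nonneg_of_le (fun n => hw _) fun n => by linarith [h n, hw (.inr n)],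
    hbound.of_nonneg_of_le (fun n => hw _) fun n => by linarith [h n, hw (.inl n)]⟩

theorem summable_sum_iff_of_pair_add_eq (hw : ∀ i, 0 ≤ w i) (ha : ∀ n, 0 ≤ a n) (hp : 0 < p)
    (hq : 0 ≤ q) (h : ∀ n, w (.inl n) + w (.inr n) = p * a n + q * a (n + 1)) :
    Summable w ↔ Summable a := by
  refine ⟨fun hw_sum => ?_, fun ha_sum => ?_⟩
  · have hpairs : Summable fun n => p⁻¹ * (w (.inl n) + w (.inr n)) :=
      ((hw_sum.comp_injective Sum.inl_injective).add
        (hw_sum.comp_injective Sum.inr_injective)).mul_left _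
    refine hpairs.of_nonneg_of_le ha fun n => ?_
    rw [h n, le_inv_mul_iff₀ hp]
    nlinarith [ha (n + 1)]
  · obtain ⟨hinl, hinr⟩ := summable_inl_and_inr_of_pair_add_eq hw h ha_sum
    exact Summable.sum w hinl hinr

theorem tsum_mem_Icc_of_pair_add_eq (hw : ∀ i, 0 ≤ w i) (ha : ∀ n, 0 ≤ a n) (hq : 0 ≤ q)
    (h : ∀ n, w (.inl n) + w (.inr n) = p * a n + q * a (n + 1)) (ha_sum : Summable a) :
    ∑' i, w i ∈ Set.Icc (p * ∑' n, a n) ((p + q) * ∑' n, a n) := by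
  have hshift : Summable fun n => a (n + 1) := (summable_nat_add_iff 1).2 ha_sum
  obtain ⟨hinl, hinr⟩ := summable_inl_and_inr_of_pair_add_eq hw h ha_sum
  have htsum : ∑' i, w i = p * ∑' n, a n + q * ∑' n, a (n + 1) := by
    rw [Summable.tsum_sum hinl hinr, ← hinl.tsum_add hinr, funext h,
      (ha_sum.mul_left p).tsum_add (hshift.mul_left q), tsum_mul_left, tsum_mul_left]
  have hshift_nonneg : 0 ≤ ∑' n, a (n + 1) := tsum_nonneg fun n => ha (n + 1)
  have hshift_le : ∑' n, a (n + 1) ≤ ∑' n, a n :=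
    tsum_comp_le_tsum_of_inj ha_sum ha Nat.succ_injective
  rw [htsum]
  constructor <;> nlinarith

end PairedSums

theorem isFrame_iff_of_tsum_comparable {H ι κ : Type*} [NormedAddCommGroup H]
    [InnerProductSpace ℂ H] {g : ι → H} {h : κ → H} {c C : ℝ} (hc : 0 < c) (hC : 0 < C)
    (hsum : ∀ x, Summable (fun i => ‖⟪x, g i⟫_ℂ‖ ^ 2) ↔ Summable (fun j => ‖⟪x, h j⟫_ℂ‖ ^ 2))
    (hbound : ∀ x, Summable (fun i => ‖⟪x, g i⟫_ℂ‖ ^ 2) →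
      ∑' j, ‖⟪x, h j⟫_ℂ‖ ^ 2 ∈
        Set.Icc (c * ∑' i, ‖⟪x, g i⟫_ℂ‖ ^ 2) (C * ∑' i, ‖⟪x, g i⟫_ℂ‖ ^ 2)) :
    IsFrame g ↔ IsFrame h := by
  constructor
  · rintro ⟨A, B, hA, hB, hg⟩
    refine ⟨c * A, C * B, by positivity, by positivity, fun x => ?_⟩
    obtain ⟨hg_sum, hg_low, hg_up⟩ := hg x
    obtain ⟨hcmp_low, hcmp_up⟩ := hbound x hg_sum
    refine ⟨(hsum x).1 hg_sum, ?_, ?_⟩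
    · nlinarith
    · nlinarith
  · rintro ⟨A, B, hA, hB, hh⟩
    refine ⟨A / C, B / c, by positivity, by positivity, fun x => ?_⟩
    obtain ⟨hh_sum, hh_low, hh_up⟩ := hh x
    have hg_sum := (hsum x).2 hh_sum
    obtain ⟨hcmp_low, hcmp_up⟩ := hbound x hg_sum
    refine ⟨hg_sum, ?_, ?_⟩
    · rw [div_mul_eq_mul_div, div_le_iff₀ hC]
      linarith
    · rw [div_mul_eq_mul_div, le_div_iff₀ hc]
      linarith

theorem stmt2_general {H : Type*} [NormedAddCommGroup H] [InnerProductSpace ℂ H]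
    (α β : ℂ) (hα : α ≠ 0) (f : ℕ → H) :
    IsFrame f ↔
      IsFrame (Sum.elim (fun n : ℕ => α • f n + β • f (n + 1))
        (fun n : ℕ => α • f n - β • f (n + 1))) := by
  have hp : 0 < 2 * ‖α‖ ^ 2 := by positivity
  have hq : 0 ≤ 2 * ‖β‖ ^ 2 := by positivity
  have hpair : ∀ (x : H) (n : ℕ),
      ‖⟪x, α • f n + β • f (n + 1)⟫_ℂ‖ ^ 2 + ‖⟪x, α • f n - β • f (n + 1)⟫_ℂ‖ ^ 2 =
        2 * ‖α‖ ^ 2 * ‖⟪x, f n⟫_ℂ‖ ^ 2 + 2 * ‖β‖ ^ 2 * ‖⟪x, f (n + 1)⟫_ℂ‖ ^ 2 := by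
    intro x n
    rw [norm_inner_add_sq_add_norm_inner_sub_sq]
    ring
  refine isFrame_iff_of_tsum_comparable hp (add_pos_of_pos_of_nonneg hp hq)
    (fun x => ?_) (fun x => ?_)
  · exact (summable_sum_iff_of_pair_add_eq (fun _ => by positivity) (fun _ => by positivity)
      hp hq (hpair x)).symm
  · exact tsum_mem_Icc_of_pair_add_eq (fun _ => by positivity) (fun _ => by positivity) hq
      (hpair x)

theorem stmt2 {H : Type*} [NormedAddCommGroup H] [InnerProductSpace ℂ H]
    [CompleteSpace H] (α β : ℂ) (hα : α ≠ 0) (f : ℕ → H) :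
    IsFrame f ↔
      IsFrame (Sum.elim (fun n : ℕ => α • f n + β • f (n + 1))
        (fun n : ℕ => α • f n - β • f (n + 1))) :=
  stmt2_general α β hα f
end

section
/- Let {f_n}_{n=1}^∞, M = {f_n + f_{n+1}}_{n=1}^∞ and N = {f_n − f_{n+1}}_{n=1}^∞ all be Bessel sequences in a complex Hilbert space H, and suppose the kernel of the synthesis operator T_F of F = {f_n}_{n=1}^∞ is invariant under the right-shift operator on ℓ². Then ker T_F = ker T_M ∩ ker T_N. -/
/-- The kernel of the synthesis operator of a sequence `g`, viewed as the set of
square-summable scalar sequences `c` with `∑ₙ cₙ gₙ = 0`. -/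
def synthKer {H : Type*} [NormedAddCommGroup H] [InnerProductSpace ℂ H]
    (g : ℕ → H) : Set (ℕ → ℂ) :=
  {c | Memℓp c 2 ∧ HasSum (fun n => c n • g n) 0}

/-- The right-shift operator on scalar sequences. -/
def rShift (c : ℕ → ℂ) : ℕ → ℂ
  | 0 => 0
  | n + 1 => c n

theorem hasSum_rShift_smul_iff {E : Type*} [AddCommGroup E] [TopologicalSpace E]
    [IsTopologicalAddGroup E] [Module ℂ E] (c : ℕ → ℂ) (g : ℕ → E) (a : E) :
    HasSum (fun n => rShift c n • g n) a ↔ HasSum (fun n => c n • g (n + 1)) a := by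
  rw [← hasSum_nat_add_iff' 1]
  simp [rShift]

section synthKer

variable {H : Type*} [NormedAddCommGroup H] [InnerProductSpace ℂ H]

theorem hasSum_smul_succ_of_rShift_mem_synthKer {f : ℕ → H} {c : ℕ → ℂ}
    (hc : rShift c ∈ synthKer f) : HasSum (fun n => c n • f (n + 1)) 0 :=
  (hasSum_rShift_smul_iff c f 0).mp hc.2

theorem synthKer_subset_inter_of_rShift_mem {f : ℕ → H}
    (hshift : ∀ c ∈ synthKer f, rShift c ∈ synthKer f) :
    synthKer f ⊆
      synthKer (fun n => f n + f (n + 1)) ∩ synthKer (fun n => f n - f (n + 1)) := by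
  rintro c hc
  have hsucc := hasSum_smul_succ_of_rShift_mem_synthKer (hshift c hc)
  refine ⟨⟨hc.1, ?_⟩, ⟨hc.1, ?_⟩⟩
  · simpa only [smul_add, add_zero] using hc.2.add hsucc
  · simpa only [smul_sub, sub_zero] using hc.2.sub hsucc

theorem inter_subset_synthKer (f : ℕ → H) :
    synthKer (fun n => f n + f (n + 1)) ∩ synthKer (fun n => f n - f (n + 1)) ⊆
      synthKer f := by
  rintro c ⟨⟨hc2, hM⟩, ⟨-, hN⟩⟩
  refine ⟨hc2, ?_⟩
  have htwice : HasSum (fun n => (2 : ℂ) • (c n • f n)) 0 := by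
    simpa only [smul_add, smul_sub, add_add_sub_cancel, two_smul, add_zero] using hM.add hN
  simpa only [smul_smul, inv_mul_cancel_left₀ (two_ne_zero : (2 : ℂ) ≠ 0), smul_zero] using
    htwice.const_smul (2 : ℂ)⁻¹

end synthKer

theorem stmt4_general {H : Type*} [NormedAddCommGroup H] [InnerProductSpace ℂ H]
    (f : ℕ → H)
    (hshift : ∀ c ∈ synthKer f, rShift c ∈ synthKer f) :
    synthKer f =
      synthKer (fun n => f n + f (n + 1)) ∩ synthKer (fun n => f n - f (n + 1)) :=
  (synthKer_subset_inter_of_rShift_mem hshift).antisymm (inter_subset_synthKer f)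

theorem stmt4 {H : Type*} [NormedAddCommGroup H] [InnerProductSpace ℂ H]
    [CompleteSpace H] (f : ℕ → H)
    (hF : IsBessel f)
    (hM : IsBessel (fun n => f n + f (n + 1)))
    (hN : IsBessel (fun n => f n - f (n + 1)))
    (hshift : ∀ c ∈ synthKer f, rShift c ∈ synthKer f) :
    synthKer f =
      synthKer (fun n => f n + f (n + 1)) ∩ synthKer (fun n => f n - f (n + 1)) :=
  stmt4_general f hshift
end

section
/- Let {f_n}_{n=1}^∞ be a sequence in a complex Hilbert space H and let T be a linear operator from span{f_n}_{n=1}^∞ to itself. Then {f_n}_{n=1}^∞ is represented by T (i.e., T(f_n + f_{n+1}) = f_{n+2} for all n ≥ 1) if and only if both sequences M = {f_n + f_{n+1}}_{n=1}^∞ and N = {f_n − f_{n+1}}_{n=1}^∞ are represented by T, that is, T(M_n + M_{n+1}) = M_{n+2} and T(N_n + N_{n+1}) = N_{n+2} for all n ≥ 1, where M_n = f_n + f_{n+1} and N_n = f_n − f_{n+1}. -/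
/-! By linearity of `T`, the sequences it represents form a submodule of `ℕ → H`, stable under
the shift `g ↦ g (· + 1)`. Hence `M = f + shift f` and `N = f - shift f` are represented when `f`
is, and conversely `f = (M + N) / 2` is represented when `M` and `N` are. -/

namespace LinearMap

variable {R M : Type*} [Ring R] [AddCommGroup M] [Module R M]

def fibonacciRepresented (T : M →ₗ[R] M) : Submodule R (ℕ → M) where
  carrier := {g | ∀ n, T (g n + g (n + 1)) = g (n + 2)}
  add_mem' {g h} hg hh n := by
    rw [Pi.add_apply, Pi.add_apply, add_add_add_comm, map_add, hg n, hh n, Pi.add_apply]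
  zero_mem' n := by simp
  smul_mem' c g hg n := by
    rw [Pi.smul_apply, Pi.smul_apply, ← smul_add, map_smul, hg n, Pi.smul_apply]

theorem shift_mem_fibonacciRepresented {T : M →ₗ[R] M} {g : ℕ → M}
    (hg : g ∈ T.fibonacciRepresented) : (fun n => g (n + 1)) ∈ T.fibonacciRepresented :=
  fun n => hg (n + 1)

theorem mem_fibonacciRepresented_iff_add_shift_and_sub_shift [Invertible (2 : R)]
    {T : M →ₗ[R] M} {g : ℕ → M} :
    g ∈ T.fibonacciRepresented ↔
      (g + fun n => g (n + 1)) ∈ T.fibonacciRepresented ∧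
        (g - fun n => g (n + 1)) ∈ T.fibonacciRepresented := by
  set S := T.fibonacciRepresented
  refine ⟨fun hg => ⟨S.add_mem hg (shift_mem_fibonacciRepresented hg),
    S.sub_mem hg (shift_mem_fibonacciRepresented hg)⟩, fun ⟨hM, hN⟩ => ?_⟩
  have hg : g = (⅟2 : R) • ((g + fun n => g (n + 1)) + (g - fun n => g (n + 1))) := by
    rw [add_add_sub_cancel, ← two_smul R g, smul_smul, invOf_mul_self, one_smul]
  rw [hg]
  exact S.smul_mem _ (S.add_mem hM hN)

end LinearMap

theorem stmt8_general {H : Type*} [NormedAddCommGroup H] [InnerProductSpace ℂ H]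
    (f : ℕ → H) (T : H →ₗ[ℂ] H) :
    (∀ n : ℕ, T (f n + f (n + 1)) = f (n + 2)) ↔
      ((∀ n : ℕ, T ((f n + f (n + 1)) + (f (n + 1) + f (n + 2))) =
          f (n + 2) + f (n + 3)) ∧
       (∀ n : ℕ, T ((f n - f (n + 1)) + (f (n + 1) - f (n + 2))) =
          f (n + 2) - f (n + 3))) := by
  have : Invertible (2 : ℂ) := invertibleOfNonzero two_ne_zero
  exact LinearMap.mem_fibonacciRepresented_iff_add_shift_and_sub_shift

theorem stmt8 {H : Type*} [NormedAddCommGroup H] [InnerProductSpace ℂ H]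
    [CompleteSpace H] (f : ℕ → H) (T : H →ₗ[ℂ] H)
    (hinv : ∀ x ∈ Submodule.span ℂ (Set.range f),
      T x ∈ Submodule.span ℂ (Set.range f)) :
    (∀ n : ℕ, T (f n + f (n + 1)) = f (n + 2)) ↔
      ((∀ n : ℕ, T ((f n + f (n + 1)) + (f (n + 1) + f (n + 2))) =
          f (n + 2) + f (n + 3)) ∧
       (∀ n : ℕ, T ((f n - f (n + 1)) + (f (n + 1) - f (n + 2))) =
          f (n + 2) - f (n + 3))) :=
  stmt8_general f T
end

section
/- Let {f_n}_{n=1}^∞ be a sequence in a complex Hilbert space H represented by a linear operator T : span{f_n}_{n=1}^∞ → span{f_n}_{n=1}^∞ (so that T(f_n + f_{n+1}) = f_{n+2} for all n ≥ 1). Suppose for some integer m ≥ 2 we have f_m ∈ span{f_1, …, f_{m−1}} and f_{m+1} ∉ span{f_1, …, f_{m−1}}. Then T f_i ∈ span{f_3, f_4, …, f_{m+1}} for every 1 ≤ i ≤ m. -/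
/-!
The recurrence `T f_{n+1} = f_{n+2} - T f_n` shows that each `T f_i` lies in the span of `T f_1`
and `f_3, …, f_{i+1}`. Since `f_m` is a combination of `f_1, …, f_{m-1}`, `T f_m` is a
combination of `T f_1` and `f_3, …, f_m`, hence so is `f_{m+1} = T f_{m-1} + T f_m`.
As `f_{m+1}` is not in `span{f_1, …, f_{m-1}} ⊇ span{f_3, …, f_m}`, the coefficient of `T f_1` in
it is nonzero, and solving for `T f_1` puts it in `span{f_3, …, f_{m+1}}`; the recurrence then
carries this to every `T f_i` with `i ≤ m`.
-/

open Submodule Set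

namespace FibonacciRepresentation

lemma range_fin_eq_image_Iio {α : Type*} (f : ℕ → α) (k : ℕ) :
    range (fun i : Fin k => f i) = f '' Iio k := by
  rw [← Fin.range_val, ← range_comp]
  rfl

lemma range_fin_add_two_eq_image_Icc {α : Type*} (f : ℕ → α) (k : ℕ) :
    range (fun j : Fin k => f (j + 2)) = f '' Icc 2 (k + 1) := by
  ext x
  constructor
  · rintro ⟨j, rfl⟩
    exact ⟨j + 2, ⟨by omega, by omega⟩, rfl⟩
  · rintro ⟨j, ⟨hj₂, hjk⟩, rfl⟩
    exact ⟨⟨j - 2, by omega⟩, by simp only [Nat.sub_add_cancel hj₂]⟩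

variable {K V : Type*} [AddCommGroup V] {f : ℕ → V}

section Ring

variable [Ring K] [Module K V] {T : V →ₗ[K] V}

lemma map_succ_eq (hrep : ∀ n, T (f n + f (n + 1)) = f (n + 2)) (n : ℕ) :
    T (f (n + 1)) = f (n + 2) - T (f n) := by
  rw [← hrep n, map_add, add_sub_cancel_left]

lemma map_mem_span_insert_map_zero (hrep : ∀ n, T (f n + f (n + 1)) = f (n + 2)) :
    ∀ i, T (f i) ∈ span K (insert (T (f 0)) (f '' Icc 2 (i + 1)))
  | 0 => subset_span (mem_insert _ _)
  | i + 1 => by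
    rw [map_succ_eq hrep]
    refine sub_mem (subset_span (mem_insert_of_mem _ ⟨i + 2, ⟨by omega, le_rfl⟩, rfl⟩)) ?_
    exact span_mono (insert_subset_insert (image_mono (Icc_subset_Icc_right (by omega))))
      (map_mem_span_insert_map_zero hrep i)

end Ring

variable [DivisionRing K] [Module K V] {T : V →ₗ[K] V}

lemma map_zero_mem_span_Icc (hrep : ∀ n, T (f n + f (n + 1)) = f (n + 2)) {k : ℕ}
    (hmem : f k ∈ span K (f '' Iio k)) (hnmem : f (k + 1) ∉ span K (f '' Iio k)) :
    T (f 0) ∈ span K (f '' Icc 2 (k + 1)) := by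
  obtain rfl | hk := k.eq_zero_or_pos
  · simp_all
  set s := f '' Icc 2 k
  have hsW : span K s ≤ span K (f '' Iio k) := by
    refine span_le.mpr ?_
    rintro _ ⟨j, ⟨-, hjk⟩, rfl⟩
    rcases hjk.lt_or_eq with hjk | rfl
    · exact subset_span (mem_image_of_mem f hjk)
    · exact hmem
  have hlt : ∀ i < k, T (f i) ∈ span K (insert (T (f 0)) s) := fun i hi =>
    span_mono (insert_subset_insert (image_mono (Icc_subset_Icc_right hi)))
      (map_mem_span_insert_map_zero hrep i)
  have hTk : T (f k) ∈ span K (insert (T (f 0)) s) := by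
    have := mem_map_of_mem (f := T) hmem
    rw [map_span, ← image_comp] at this
    exact span_le.mpr (by rintro _ ⟨i, hi, rfl⟩; exact hlt i hi) this
  have hf_succ : f (k + 1) ∈ span K (insert (T (f 0)) s) := by
    obtain ⟨n, rfl⟩ := Nat.exists_eq_add_one_of_ne_zero hk.ne'
    rw [← hrep n, map_add]
    exact add_mem (hlt n (by omega)) hTk
  have hf_succ_mem : f (k + 1) ∈ f '' Icc 2 (k + 1) := mem_image_of_mem f ⟨by omega, le_rfl⟩
  exact span_mono (insert_subset hf_succ_mem (image_mono (Icc_subset_Icc_right (by omega))))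
    (mem_span_insert_exchange hf_succ fun h => hnmem (hsW h))

end FibonacciRepresentation

/- Here `f : ℕ → H` is 0-indexed: `f 0, f 1, …` correspond to `f_1, f_2, …`.
With `k = m - 1`, the hypotheses `f_m ∈ span{f_1,…,f_{m-1}}` and
`f_{m+1} ∉ span{f_1,…,f_{m-1}}` become the ones below, and the conclusion
`T f_i ∈ span{f_3,…,f_{m+1}}` for `1 ≤ i ≤ m` becomes `T (f i) ∈ span{f 2, …, f (k+1)}`
for `i ≤ k`. -/
open FibonacciRepresentation in
theorem stmt13_general {H : Type*} [NormedAddCommGroup H] [InnerProductSpace ℂ H]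
    (f : ℕ → H) (T : H →ₗ[ℂ] H)
    (hrep : ∀ n : ℕ, T (f n + f (n + 1)) = f (n + 2))
    (k : ℕ)
    (hmem : f k ∈ Submodule.span ℂ (Set.range (fun i : Fin k => f i)))
    (hnmem : f (k + 1) ∉ Submodule.span ℂ (Set.range (fun i : Fin k => f i))) :
    ∀ i : ℕ, i ≤ k →
      T (f i) ∈ Submodule.span ℂ (Set.range (fun j : Fin k => f (j + 2))) := by
  rw [range_fin_eq_image_Iio] at hmem hnmem
  rw [range_fin_add_two_eq_image_Icc]
  have h₀ := map_zero_mem_span_Icc hrep hmem hnmem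
  intro i hi
  refine span_le.mpr (insert_subset h₀ ?_) (map_mem_span_insert_map_zero hrep i)
  exact (image_mono (Icc_subset_Icc_right (by omega))).trans subset_span

theorem stmt13 {H : Type*} [NormedAddCommGroup H] [InnerProductSpace ℂ H]
    [CompleteSpace H] (f : ℕ → H) (T : H →ₗ[ℂ] H)
    (hinv : ∀ x ∈ Submodule.span ℂ (Set.range f),
      T x ∈ Submodule.span ℂ (Set.range f))
    (hrep : ∀ n : ℕ, T (f n + f (n + 1)) = f (n + 2))
    (k : ℕ) (hk : 1 ≤ k)
    (hmem : f k ∈ Submodule.span ℂ (Set.range (fun i : Fin k => f i)))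
    (hnmem : f (k + 1) ∉ Submodule.span ℂ (Set.range (fun i : Fin k => f i))) :
    ∀ i : ℕ, i ≤ k →
      T (f i) ∈ Submodule.span ℂ (Set.range (fun j : Fin k => f (j + 2))) :=
  stmt13_general f T hrep k hmem hnmem
end

section
/- Let {f_n}_{n=1}^∞ be a complete, linearly dependent sequence in an infinite-dimensional complex Hilbert space H. Then for every Fibonacci representation operator T of {f_n}_{n=1}^∞ (i.e., every linear operator T : span{f_n}_{n=1}^∞ → span{f_n}_{n=1}^∞ with T(f_n + f_{n+1}) = f_{n+2} for all n ≥ 1), the range of T equals span{f_n}_{n=3}^∞. -/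
/-!
Write `V = span {f (n + 2)}`. Since `T (f n) + T (f (n + 1)) = f (n + 2)`, we have
`T (f n) ≡ (-1) ^ n • T (f 0)` modulo `V`, so everything reduces to `T (f 0) ∈ V`.
Encode a linear relation `∑ pₙ • f n = 0` by the polynomial `p`. If `T (f 0) ∉ V`, applying `T`
to a relation shows `p (-1) = 0`, so `p = (X + 1) q`; applying `T` to
`∑ qₙ • (f n + f (n + 1)) = 0` gives the relation `X ^ 2 * q`, of one degree more. Starting from
the relation given by linear dependence we get monic relations of every large degree, so
`span (range f)` is finite-dimensional, hence closed; being dense, it is all of `H`.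
-/

open Polynomial Submodule

theorem FiniteDimensional.of_dense_submodule {𝕜 E : Type*} [NontriviallyNormedField 𝕜]
    [CompleteSpace 𝕜] [AddCommGroup E] [Module 𝕜 E] [TopologicalSpace E]
    [IsTopologicalAddGroup E] [ContinuousSMul 𝕜 E] [T2Space E]
    (U : Submodule 𝕜 E) [FiniteDimensional 𝕜 U] (hU : Dense (U : Set E)) :
    FiniteDimensional 𝕜 E := by
  have hU_top : U = ⊤ := by
    rw [← U.closed_of_finiteDimensional.submodule_topologicalClosure_eq]
    exact dense_iff_topologicalClosure_eq_top.1 hU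
  exact Module.Finite.equiv (LinearEquiv.ofTop U hU_top)

section CommRing

variable {R M : Type*} [CommRing R] [AddCommGroup M] [Module R M] (f : ℕ → M)

/-- `seqComb f p = ∑ pₙ • f n`. -/
noncomputable def seqComb : R[X] →ₗ[R] M :=
  lsum fun n => LinearMap.id.smulRight (f n)

@[simp]
theorem seqComb_monomial (n : ℕ) (a : R) : seqComb f (monomial n a) = a • f n := by
  simp [seqComb]

@[simp]
theorem seqComb_C_mul_X_pow (n : ℕ) (a : R) : seqComb f (C a * X ^ n) = a • f n := by
  rw [C_mul_X_pow_eq_monomial, seqComb_monomial]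

@[simp]
theorem seqComb_X_pow (n : ℕ) : seqComb f (X ^ n : R[X]) = f n := by
  rw [X_pow_eq_monomial, seqComb_monomial, one_smul]

theorem mem_span_image_Iio_of_forall_isMonicOfDegree {N : ℕ}
    (h : ∀ m, N ≤ m → ∃ p : R[X], IsMonicOfDegree p m ∧ seqComb f p = 0) (m : ℕ) :
    f m ∈ span R (f '' Set.Iio N) := by
  induction m using Nat.strong_induction_on with
  | _ m ih =>
    rcases lt_or_ge m N with hm | hm
    · exact subset_span ⟨m, hm, rfl⟩
    obtain ⟨p, hp, hp0⟩ := h m hm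
    have hfm : f m = -∑ k ∈ Finset.range m, p.coeff k • f k := by
      rw [hp.monic.as_sum, hp.natDegree_eq, map_add, map_sum, seqComb_X_pow] at hp0
      simpa only [seqComb_C_mul_X_pow] using eq_neg_of_add_eq_zero_left hp0
    rw [hfm]
    exact neg_mem (sum_mem fun k hk => smul_mem _ _ (ih k (Finset.mem_range.1 hk)))

variable {f} {T : M →ₗ[R] M} (hT : ∀ n, T (f n + f (n + 1)) = f (n + 2))
include hT

theorem apply_seqComb_X_add_one_mul (q : R[X]) :
    T (seqComb f ((X + 1) * q)) = seqComb f (X ^ 2 * q) := by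
  induction q using Polynomial.induction_on' with
  | add p q hp hq => simp only [mul_add, map_add, hp, hq]
  | monomial n a =>
    rw [add_mul, one_mul, X_mul_monomial, X_pow_mul_monomial, map_add, seqComb_monomial,
      seqComb_monomial, seqComb_monomial, ← smul_add, map_smul, add_comm, hT]

theorem apply_sub_neg_one_pow_smul_mem (n : ℕ) :
    T (f n) - (-1 : R) ^ n • T (f 0) ∈ span R (Set.range fun n => f (n + 2)) := by
  induction n with
  | zero => simp
  | succ n ih =>
    have hrec : T (f (n + 1)) - (-1 : R) ^ (n + 1) • T (f 0)
        = f (n + 2) - (T (f n) - (-1 : R) ^ n • T (f 0)) := by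
      rw [← hT n, map_add, pow_succ]
      module
    rw [hrec]
    exact sub_mem (subset_span ⟨n, rfl⟩) ih

theorem apply_seqComb_sub_eval_smul_mem (p : R[X]) :
    T (seqComb f p) - p.eval (-1) • T (f 0) ∈ span R (Set.range fun n => f (n + 2)) := by
  induction p using Polynomial.induction_on' with
  | add p q hp hq =>
    convert add_mem hp hq using 1
    rw [map_add, map_add, eval_add, add_smul]
    abel
  | monomial n a =>
    convert smul_mem _ a (apply_sub_neg_one_pow_smul_mem hT n) using 1
    rw [seqComb_monomial, eval_monomial, map_smul, smul_sub, mul_smul]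

theorem map_span_eq_span_shift (h0 : T (f 0) ∈ span R (Set.range fun n => f (n + 2))) :
    map T (span R (Set.range f)) = span R (Set.range fun n => f (n + 2)) := by
  rw [map_span]
  apply le_antisymm
  · rw [span_le]
    rintro _ ⟨_, ⟨n, rfl⟩, rfl⟩
    have h := add_mem (apply_sub_neg_one_pow_smul_mem hT n) (smul_mem _ ((-1 : R) ^ n) h0)
    rwa [sub_add_cancel] at h
  · rw [span_le, Set.range_subset_iff]
    intro n
    rw [← hT n, map_add]
    exact add_mem (subset_span ⟨f n, ⟨n, rfl⟩, rfl⟩) (subset_span ⟨f (n + 1), ⟨n + 1, rfl⟩, rfl⟩)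

end CommRing

section Field

variable {K M : Type*} [Field K] [AddCommGroup M] [Module K M] {f : ℕ → M}

theorem exists_monic_seqComb_eq_zero (hdep : ¬ LinearIndependent K f) :
    ∃ p : K[X], p.Monic ∧ seqComb f p = 0 := by
  obtain ⟨s, g, hg, i, hi, hgi⟩ :
      ∃ (s : Finset ℕ) (g : ℕ → K), ∑ i ∈ s, g i • f i = 0 ∧ ∃ i ∈ s, g i ≠ 0 := by
    simpa [linearIndependent_iff'] using hdep
  set p := ∑ i ∈ s, monomial i (g i)
  have hp : p ≠ 0 := fun h => hgi <| by
    simpa [p, finsetSum_coeff, coeff_monomial, hi] using congrArg (coeff · i) h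
  refine ⟨p * C p.leadingCoeff⁻¹, monic_mul_leadingCoeff_inv hp, ?_⟩
  rw [mul_comm, ← smul_eq_C_mul, map_smul, map_sum]
  simp [hg]

variable {T : M →ₗ[K] M} (hT : ∀ n, T (f n + f (n + 1)) = f (n + 2))
  (h0 : T (f 0) ∉ span K (Set.range fun n => f (n + 2)))
include hT h0

theorem isRoot_neg_one_of_seqComb_eq_zero {p : K[X]} (hp : seqComb f p = 0) :
    p.IsRoot (-1) := by
  by_contra hroot
  have hmem := apply_seqComb_sub_eval_smul_mem hT p
  rw [hp, map_zero, zero_sub, neg_mem_iff, smul_mem_iff _ hroot] at hmem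
  exact h0 hmem

theorem exists_isMonicOfDegree_succ {p : K[X]} {m : ℕ} (hp : IsMonicOfDegree p m)
    (hp0 : seqComb f p = 0) : ∃ q : K[X], IsMonicOfDegree q (m + 1) ∧ seqComb f q = 0 := by
  have hX1 : IsMonicOfDegree (X + 1 : K[X]) 1 := by simpa using isMonicOfDegree_X_add_one (1 : K)
  set q := p /ₘ (X + 1)
  have hpq : (X + 1) * q = p := by
    have hroot := isRoot_neg_one_of_seqComb_eq_zero hT h0 hp0
    simpa using mul_divByMonic_eq_iff_isRoot.2 hroot
  have hq : IsMonicOfDegree q q.natDegree := ⟨rfl, hX1.monic.of_mul_monic_left (hpq ▸ hp.monic)⟩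
  have hm : m = 1 + q.natDegree := by rw [← hp.natDegree_eq, ← hpq, (hX1.mul hq).natDegree_eq]
  refine ⟨X ^ 2 * q, ?_, ?_⟩
  · convert (isMonicOfDegree_X_pow K 2).mul hq using 1
    omega
  · rw [← apply_seqComb_X_add_one_mul hT, hpq, hp0, map_zero]

theorem finiteDimensional_span_of_not_linearIndependent (hdep : ¬ LinearIndependent K f) :
    FiniteDimensional K (span K (Set.range f)) := by
  obtain ⟨p, hp, hp0⟩ := exists_monic_seqComb_eq_zero hdep
  have hrel : ∀ m, p.natDegree ≤ m → ∃ q : K[X], IsMonicOfDegree q m ∧ seqComb f q = 0 := by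
    intro m hm
    induction m, hm using Nat.le_induction with
    | base => exact ⟨p, ⟨rfl, hp⟩, hp0⟩
    | succ m _ ih =>
      obtain ⟨q, hq, hq0⟩ := ih
      exact exists_isMonicOfDegree_succ hT h0 hq hq0
  have := FiniteDimensional.span_of_finite K ((Set.finite_Iio p.natDegree).image f)
  exact finiteDimensional_of_le <|
    span_le.2 (Set.range_subset_iff.2 (mem_span_image_Iio_of_forall_isMonicOfDegree f hrel))

end Field

theorem stmt14_general {H : Type*} [NormedAddCommGroup H] [InnerProductSpace ℂ H]
    (hdim : ¬ FiniteDimensional ℂ H) (f : ℕ → H)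
    (hcomplete : Dense (↑(Submodule.span ℂ (Set.range f)) : Set H))
    (hdep : ¬ LinearIndependent ℂ f) :
    ∀ T : H →ₗ[ℂ] H,
      (∀ x ∈ Submodule.span ℂ (Set.range f),
        T x ∈ Submodule.span ℂ (Set.range f)) →
      (∀ n : ℕ, T (f n + f (n + 1)) = f (n + 2)) →
      Submodule.map T (Submodule.span ℂ (Set.range f)) =
        Submodule.span ℂ (Set.range (fun n => f (n + 2))) := by
  intro T _ hT
  refine map_span_eq_span_shift hT (by_contra fun h0 => hdim ?_)
  have := finiteDimensional_span_of_not_linearIndependent hT h0 hdep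
  exact FiniteDimensional.of_dense_submodule _ hcomplete

theorem stmt14 {H : Type*} [NormedAddCommGroup H] [InnerProductSpace ℂ H]
    [CompleteSpace H] (hdim : ¬ FiniteDimensional ℂ H) (f : ℕ → H)
    (hcomplete : Dense (↑(Submodule.span ℂ (Set.range f)) : Set H))
    (hdep : ¬ LinearIndependent ℂ f) :
    ∀ T : H →ₗ[ℂ] H,
      (∀ x ∈ Submodule.span ℂ (Set.range f),
        T x ∈ Submodule.span ℂ (Set.range f)) →
      (∀ n : ℕ, T (f n + f (n + 1)) = f (n + 2)) →
      Submodule.map T (Submodule.span ℂ (Set.range f)) =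
        Submodule.span ℂ (Set.range (fun n => f (n + 2))) :=
  stmt14_general hdim f hcomplete hdep
end

section
/- Let {f_n}_{n=1}^∞ be a complete sequence in an infinite-dimensional complex Hilbert space H that is represented by a linear operator T : span{f_n}_{n=1}^∞ → span{f_n}_{n=1}^∞ (so that T(f_n + f_{n+1}) = f_{n+2} for all n ≥ 1). Then there exists m ∈ ℕ such that the sequence {f_{m+n} + f_{m+n+1}}_{n=1}^∞ is linearly independent. -/
/-!
Let `U t` be the span of `f 0, …, f t`; since `T (f 0)` lies in the span of the `f n`, it lies
in `U K` for some `K`. If the tail `f (m + n) + f (m + n + 1)` with `m = K + 1` were linearly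
dependent, so would be its image `f (m + n + 2)` under `T`, and the last nonzero term of a
relation gives `f (t + 1) ∈ U t` for some `t > K`. Then `T (f n + f (n + 1)) = f (n + 2)`
shows, inductively from `T (f 0) ∈ U t` and `f (t + 1) ∈ U t`, that `T` maps `f 0, …, f t` into
`U t`, so `U t` is `T`-invariant and contains every `f n`. A dense subspace inside the closed
finite-dimensional `U t` forces `H` to be finite-dimensional.
-/

open Submodule Set

theorem linearIndependent_of_forall_notMem_span_image_Iio {ι K V : Type*} [LinearOrder ι]
    [DivisionRing K] [AddCommGroup V] [Module K V] {u : ι → V}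
    (h : ∀ j, u j ∉ span K (u '' Iio j)) : LinearIndependent K u := by
  rw [linearIndependent_iff']
  intro s
  induction s using Finset.induction_on_max with
  | empty => simp
  | insert a s has ih =>
    intro g hg i hi
    have haS : a ∉ s := fun ha => lt_irrefl a (has a ha)
    rw [Finset.sum_insert haS, add_eq_zero_iff_eq_neg] at hg
    have hrest : ∑ i ∈ s, g i • u i ∈ span K (u '' Iio a) :=
      sum_mem fun i hi => smul_mem _ _ (subset_span ⟨i, has i hi, rfl⟩)
    have hga : g a = 0 := by
      by_contra hne
      exact h a ((smul_mem_iff _ hne).mp (hg ▸ neg_mem hrest))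
    rw [hga, zero_smul, zero_eq_neg] at hg
    rcases Finset.mem_insert.mp hi with rfl | hi
    · exact hga
    · exact ih g hg i hi

theorem exists_mem_span_image_Iic_of_mem_span_range {R M : Type*} [Semiring R]
    [AddCommMonoid M] [Module R M] {f : ℕ → M} {x : M} (hx : x ∈ span R (range f)) :
    ∃ K, x ∈ span R (f '' Iic K) := by
  have hmono : Monotone fun K => span R (f '' Iic K) := fun _ _ h =>
    span_mono (image_mono (Iic_subset_Iic.mpr h))
  rwa [← image_univ, ← iUnion_Iic, image_iUnion, span_iUnion,
    mem_iSup_of_directed _ hmono.directed_le] at hx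

theorem finiteDimensional_of_dense_of_le {𝕜 E : Type*} [NontriviallyNormedField 𝕜]
    [CompleteSpace 𝕜] [AddCommGroup E] [TopologicalSpace E] [IsTopologicalAddGroup E]
    [Module 𝕜 E] [ContinuousSMul 𝕜 E] [T2Space E] {S P : Submodule 𝕜 E}
    (hS : Dense (S : Set E)) (hSP : S ≤ P) [FiniteDimensional 𝕜 P] : FiniteDimensional 𝕜 E := by
  have hP : P = ⊤ := eq_top_iff'.mpr fun x => by
    have hx : x ∈ closure (P : Set E) := (hS.mono hSP).closure_eq ▸ mem_univ x
    rwa [P.closed_of_finiteDimensional.closure_eq] at hx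
  subst hP
  exact topEquiv.finiteDimensional

theorem fibonacci_mem_of_forall_mem {R M : Type*} [Semiring R] [AddCommMonoid M] [Module R M]
    (T : M →ₗ[R] M) {f : ℕ → M} (hrep : ∀ n, T (f n + f (n + 1)) = f (n + 2)) {W : Submodule R M}
    (hW : ∀ x ∈ W, T x ∈ W) (h0 : f 0 ∈ W) (h1 : f 1 ∈ W) (n : ℕ) : f n ∈ W := by
  suffices ∀ n, f n ∈ W ∧ f (n + 1) ∈ W from (this n).1
  intro n
  induction n with
  | zero => exact ⟨h0, h1⟩
  | succ n ih => exact ⟨ih.2, hrep n ▸ hW _ (add_mem ih.1 ih.2)⟩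

section FibonacciRepresentation

variable {R M : Type*} [Ring R] [AddCommGroup M] [Module R M] (T : M →ₗ[R] M) {f : ℕ → M}

theorem apply_mem_of_forall_le_succ_mem (hrep : ∀ n, T (f n + f (n + 1)) = f (n + 2))
    {W : Submodule R M} {t : ℕ} (h0 : T (f 0) ∈ W) (hf : ∀ n ≤ t + 1, f n ∈ W) :
    ∀ n ≤ t, T (f n) ∈ W := by
  intro n
  induction n with
  | zero => exact fun _ => h0
  | succ n ih =>
    intro hn
    have hsucc : T (f (n + 1)) = f (n + 2) - T (f n) := by
      rw [← hrep n, map_add, add_sub_cancel_left]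
    rw [hsucc]
    exact sub_mem (hf _ (by omega)) (ih (by omega))

theorem span_range_le_span_image_Iic (hrep : ∀ n, T (f n + f (n + 1)) = f (n + 2)) {t : ℕ}
    (h0 : T (f 0) ∈ span R (f '' Iic t)) (hsucc : f (t + 1) ∈ span R (f '' Iic t)) :
    span R (range f) ≤ span R (f '' Iic t) := by
  have hf : ∀ n ≤ t + 1, f n ∈ span R (f '' Iic t) := by
    intro n hn
    rcases Nat.le_succ_iff.mp hn with hle | rfl
    · exact subset_span ⟨n, hle, rfl⟩
    · exact hsucc
  have hinv : ∀ x ∈ span R (f '' Iic t), T x ∈ span R (f '' Iic t) := by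
    suffices span R (f '' Iic t) ≤ (span R (f '' Iic t)).comap T from fun x hx => this hx
    rw [span_le]
    rintro _ ⟨n, hn, rfl⟩
    exact apply_mem_of_forall_le_succ_mem T hrep h0 hf n hn
  rw [span_le, range_subset_iff]
  exact fibonacci_mem_of_forall_mem T hrep hinv (hf 0 (by omega)) (hf 1 (by omega))

end FibonacciRepresentation

theorem linearIndependent_add_of_forall_notMem_span {K V : Type*} [DivisionRing K]
    [AddCommGroup V] [Module K V] (T : V →ₗ[K] V) {f : ℕ → V}
    (hrep : ∀ n, T (f n + f (n + 1)) = f (n + 2)) {m : ℕ}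
    (h : ∀ t, m + 1 ≤ t → f (t + 1) ∉ span K (f '' Iic t)) :
    LinearIndependent K fun n => f (m + n) + f (m + n + 1) := by
  apply LinearIndependent.of_comp T
  have himage : T ∘ (fun n => f (m + n) + f (m + n + 1)) = fun n => f (m + n + 2) :=
    funext fun n => hrep (m + n)
  rw [himage]
  refine linearIndependent_of_forall_notMem_span_image_Iio fun j hj => h (m + j + 1) (by omega) ?_
  refine span_mono ?_ hj
  rintro _ ⟨i, hi, rfl⟩
  exact ⟨m + i + 2, by simp only [mem_Iio, mem_Iic] at hi ⊢; omega, rfl⟩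

theorem stmt15_general {H : Type*} [NormedAddCommGroup H] [InnerProductSpace ℂ H]
    (hdim : ¬ FiniteDimensional ℂ H) (f : ℕ → H)
    (hcomplete : Dense (↑(Submodule.span ℂ (Set.range f)) : Set H))
    (T : H →ₗ[ℂ] H)
    (hinv : ∀ x ∈ Submodule.span ℂ (Set.range f),
      T x ∈ Submodule.span ℂ (Set.range f))
    (hrep : ∀ n : ℕ, T (f n + f (n + 1)) = f (n + 2)) :
    ∃ m : ℕ, 1 ≤ m ∧
      LinearIndependent ℂ (fun n : ℕ => f (m + n) + f (m + n + 1)) := by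
  obtain ⟨K, hK⟩ :=
    exists_mem_span_image_Iic_of_mem_span_range (hinv _ (subset_span (mem_range_self 0)))
  refine ⟨K + 1, by omega, linearIndependent_add_of_forall_notMem_span T hrep fun t ht hsucc => ?_⟩
  have h0 : T (f 0) ∈ span ℂ (f '' Iic t) :=
    span_mono (image_mono (Iic_subset_Iic.mpr (by omega))) hK
  have : FiniteDimensional ℂ (span ℂ (f '' Iic t)) :=
    FiniteDimensional.span_of_finite ℂ ((finite_Iic t).image f)
  exact hdim (finiteDimensional_of_dense_of_le hcomplete
    (span_range_le_span_image_Iic T hrep h0 hsucc))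

theorem stmt15 {H : Type*} [NormedAddCommGroup H] [InnerProductSpace ℂ H]
    [CompleteSpace H] (hdim : ¬ FiniteDimensional ℂ H) (f : ℕ → H)
    (hcomplete : Dense (↑(Submodule.span ℂ (Set.range f)) : Set H))
    (T : H →ₗ[ℂ] H)
    (hinv : ∀ x ∈ Submodule.span ℂ (Set.range f),
      T x ∈ Submodule.span ℂ (Set.range f))
    (hrep : ∀ n : ℕ, T (f n + f (n + 1)) = f (n + 2)) :
    ∃ m : ℕ, 1 ≤ m ∧
      LinearIndependent ℂ (fun n : ℕ => f (m + n) + f (m + n + 1)) :=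
  stmt15_general hdim f hcomplete T hinv hrep
end

section
/- Let {f_n}_{n=1}^∞ be a sequence in a complex Hilbert space H and T : span{f_n}_{n=1}^∞ → span{f_n}_{n=1}^∞ a linear operator. Then the following are equivalent: (i) T(f_n + f_{n+1}) = f_{n+2} for all n ≥ 1; (ii) T f_1 + T f_2 = f_3 and for all n ≥ 4, f_n = Σ_{i=a_n}^{2a_n} [ C(i + b_n, 2i − 2a_n + b_n) T^{i+b_n} f_2 + C(i + b_n, 2i − 2a_n + b_n + 1) T^{i+b_n+1} f_1 ], where a_n = ⌊(n−1)/2⌋, b_n = n − 2a_n − 2, and C(n, k) denotes the binomial coefficient (with C(n, k) = 0 when k > n or k < 0). -/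
/-- Binomial coefficient `C(n, k)` for integers, with the convention that it
vanishes when `k < 0` or `k > n`. -/
def zbinom (n k : ℤ) : ℕ :=
  if 0 ≤ k ∧ k ≤ n then n.toNat.choose k.toNat else 0

/-!
A sequence with a Fibonacci representation by `T` is determined by its first two terms. With the
polynomials `Q 0 = 0`, `Q 1 = 1`, `Q (n + 2) = X (Q n + Q (n + 1))`, the vectors
`g_n = Q_{n-1}(T) f_2 + T Q_{n-2}(T) f_1` (`n ≥ 2`) satisfy the recurrence and start with
`g_2 = f_2`, `g_3 = T f_1 + T f_2`, so `(i)` holds iff `f_n = g_n` for all `n ≥ 2`. Pascal's rule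
shows that the coefficient of `X ^ j` in `Q n` is `C(j, n - 1 - j)`, and the substitution
`m = i + b` turns the sum in `(ii)` into the coefficient expansion of `g_n`: the terms outside the
summation range vanish.
-/

open Finset Polynomial

theorem zbinom_natCast (n k : ℕ) : zbinom n k = n.choose k := by
  unfold zbinom
  split_ifs with h
  · simp
  · rw [Nat.choose_eq_zero_of_lt (by omega)]

theorem zbinom_of_neg {n k : ℤ} (hk : k < 0) : zbinom n k = 0 := if_neg (by omega)

theorem zbinom_of_lt {n k : ℤ} (h : n < k) : zbinom n k = 0 := if_neg (by omega)

theorem zbinom_succ_succ (n : ℕ) (k : ℤ) :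
    zbinom (n + 1) (k + 1) = zbinom n k + zbinom n (k + 1) := by
  obtain hk | rfl | hk : k < -1 ∨ k = -1 ∨ 0 ≤ k := by omega
  · rw [zbinom_of_neg (by omega), zbinom_of_neg (by omega), zbinom_of_neg (by omega)]
  · simp [zbinom]
    omega
  · lift k to ℕ using hk
    have h := Nat.choose_succ_succ' n k
    rw [← zbinom_natCast, ← zbinom_natCast, ← zbinom_natCast] at h
    exact_mod_cast h

/-- At `X = 1` these polynomials give the Fibonacci numbers. -/
noncomputable def fibPoly : ℕ → ℕ[X]
  | 0 => 0
  | 1 => 1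
  | n + 2 => X * (fibPoly n + fibPoly (n + 1))

/-- That is, `fibPoly n = ∑ j, C(j, n - 1 - j) X ^ j`. -/
theorem coeff_fibPoly : ∀ n j : ℕ, (fibPoly n).coeff j = zbinom j (2 * j - n + 1)
  | 0, j => by rw [fibPoly, coeff_zero, zbinom_of_lt (by omega)]
  | 1, 0 => by simp [fibPoly, zbinom]
  | 1, j + 1 => by simp [fibPoly, coeff_one, zbinom_of_lt]
  | n + 2, 0 => by rw [fibPoly, coeff_X_mul_zero, zbinom_of_neg (by omega)]
  | n + 2, j + 1 => by
    rw [fibPoly, coeff_X_mul, coeff_add, coeff_fibPoly n j, coeff_fibPoly (n + 1) j]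
    convert ((zbinom_succ_succ j (2 * j - n)).trans (add_comm _ _)).symm using 3 <;>
      push_cast <;> ring

theorem natDegree_fibPoly_le (n : ℕ) : (fibPoly n).natDegree ≤ n - 1 :=
  natDegree_le_iff_coeff_eq_zero.2 fun j hj => by rw [coeff_fibPoly, zbinom_of_lt (by omega)]

section FibRep

variable {R M : Type*} [Semiring R] [AddCommMonoid M] [Module R M] (T : Module.End R M)

def HasFibRep (g : ℕ → M) : Prop :=
  ∀ n, T (g n + g (n + 1)) = g (n + 2)

variable {T} in
theorem HasFibRep.eq_of_init_eq {g h : ℕ → M} (hg : HasFibRep T g) (hh : HasFibRep T h)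
    (h0 : g 0 = h 0) (h1 : g 1 = h 1) : g = h := by
  funext n
  induction n using Nat.twoStepInduction with
  | zero => exact h0
  | one => exact h1
  | more n ihn ihn1 => rw [← hg, ← hh, ihn, ihn1]

/-- The Fibonacci representation by `T` starting with `x, y`, shifted by one:
`fibSeq T x y n` is its term of index `n + 1`. -/
noncomputable def fibSeq (x y : M) (n : ℕ) : M :=
  aeval T (fibPoly (n + 1)) y + T (aeval T (fibPoly n) x)

theorem hasFibRep_fibSeq (x y : M) : HasFibRep T (fibSeq T x y) := fun n => by
  simp only [fibSeq, fibPoly, map_mul, aeval_X, map_add, Module.End.mul_apply, LinearMap.add_apply]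
  abel

theorem fibSeq_zero (x y : M) : fibSeq T x y 0 = y := by simp [fibSeq, fibPoly]

theorem fibSeq_one (x y : M) : fibSeq T x y 1 = T y + T x := by simp [fibSeq, fibPoly]

theorem hasFibRep_iff_eq_fibSeq {f : ℕ → M} :
    HasFibRep T f ↔ ∀ n, f (n + 1) = fibSeq T (f 0) (f 1) n := by
  constructor
  · intro hf
    refine congrFun (HasFibRep.eq_of_init_eq (fun n => hf (n + 1)) (hasFibRep_fibSeq T _ _)
      (fibSeq_zero T _ _).symm ?_)
    rw [fibSeq_one, ← hf 0, map_add, add_comm]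
  · rintro h (_ | n)
    · show T (f 0 + f 1) = f (1 + 1)
      rw [h 1, fibSeq_one, map_add, add_comm]
    · rw [h n, h (n + 1), show n + 1 + 2 = n + 2 + 1 from rfl, h (n + 2)]
      exact hasFibRep_fibSeq T _ _ n

theorem fibSeq_eq_sum_range (x y : M) (k : ℕ) :
    fibSeq T x y k = ∑ m ∈ range (k + 1),
      ((fibPoly (k + 1)).coeff m • (T ^ m) y + (fibPoly k).coeff m • (T ^ (m + 1)) x) := by
  rw [fibSeq, aeval_eq_sum_range' (n := k + 1) ((natDegree_fibPoly_le _).trans_lt (by omega)),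
    aeval_eq_sum_range' (n := k + 1) ((natDegree_fibPoly_le _).trans_lt (by omega))]
  simp [LinearMap.sum_apply, pow_succ', Module.End.mul_apply, sum_add_distrib]

theorem sum_Icc_zbinom_smul_eq_fibSeq (x y : M) {n a : ℕ} {b : ℤ} (hn : 2 ≤ n)
    (ha : a = (n - 1) / 2) (hb : b = n - 2 * a - 2) :
    ∑ i ∈ Icc a (2 * a),
      ((zbinom (i + b) (2 * i - 2 * a + b) : R) • (T ^ (i + b).toNat) y +
        (zbinom (i + b) (2 * i - 2 * a + b + 1) : R) • (T ^ ((i + b).toNat + 1)) x) =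
      fibSeq T x y (n - 2) := by
  -- After the substitution `m = i + b` this is the expansion of `fibSeq` by coefficients.
  obtain ⟨d, rfl⟩ : ∃ d : ℕ, b = -d := ⟨(-b).toNat, by omega⟩
  have hIcc : Icc a (2 * a) = (Icc (n - 2 - a) (n - 2)).map (addRightEmbedding d) := by
    rw [map_add_right_Icc]
    congr 1 <;> omega
  rw [hIcc, sum_map, fibSeq_eq_sum_range]
  symm
  refine (sum_subset (fun m hm => ?_) fun m hm hm' => ?_).symm.trans (sum_congr rfl fun m hm => ?_)
  · simp only [mem_Icc, mem_range] at hm ⊢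
    omega
  · simp only [mem_Icc, mem_range, not_and_or, not_le] at hm hm'
    rw [coeff_fibPoly, coeff_fibPoly, zbinom_of_neg (by omega), zbinom_of_neg (by omega),
      zero_smul, zero_smul, add_zero]
  · rw [mem_Icc] at hm
    have hm' : ((m + d : ℕ) + -(d : ℤ)).toNat = m := by omega
    rw [addRightEmbedding_apply, hm', coeff_fibPoly, coeff_fibPoly, ← Nat.cast_smul_eq_nsmul R,
      ← Nat.cast_smul_eq_nsmul R (zbinom _ _)]
    congr 4 <;> omega

end FibRep

/- Here `f : ℕ → H` is 0-indexed: `f 0, f 1, …` correspond to the paper's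
`f_1, f_2, …`, so the paper's `f_n` is `f (n - 1)`. -/
theorem stmt16_general {H : Type*} [NormedAddCommGroup H] [InnerProductSpace ℂ H]
    (f : ℕ → H) (T : H →ₗ[ℂ] H) :
    (∀ n : ℕ, T (f n + f (n + 1)) = f (n + 2)) ↔
      (T (f 0) + T (f 1) = f 2 ∧
        ∀ n : ℕ, 4 ≤ n → ∀ a : ℕ, ∀ b : ℤ,
          a = (n - 1) / 2 → b = (n : ℤ) - 2 * a - 2 →
          f (n - 1) =
            ∑ i ∈ Finset.Icc a (2 * a),
              ((zbinom ((i : ℤ) + b) (2 * (i : ℤ) - 2 * (a : ℤ) + b) : ℂ) •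
                  (T ^ ((i : ℤ) + b).toNat) (f 1) +
               (zbinom ((i : ℤ) + b) (2 * (i : ℤ) - 2 * (a : ℤ) + b + 1) : ℂ) •
                  (T ^ (((i : ℤ) + b).toNat + 1)) (f 0))) := by
  refine (hasFibRep_iff_eq_fibSeq T).trans ⟨fun h => ⟨?_, fun n hn a b ha hb => ?_⟩, ?_⟩
  · rw [show f 2 = f (1 + 1) from rfl, h 1, fibSeq_one, add_comm]
  · rw [sum_Icc_zbinom_smul_eq_fibSeq T _ _ (by omega) ha hb, ← h]
    congr 1
    omega
  · rintro ⟨h2, hf⟩ (_ | _ | n)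
    · exact (fibSeq_zero T _ _).symm
    · rw [fibSeq_one, ← h2, add_comm]
    · have h := hf (n + 4) (by omega) _ _ rfl rfl
      rwa [sum_Icc_zbinom_smul_eq_fibSeq T _ _ (by omega) rfl rfl] at h

theorem stmt16 {H : Type*} [NormedAddCommGroup H] [InnerProductSpace ℂ H]
    [CompleteSpace H] (f : ℕ → H) (T : H →ₗ[ℂ] H)
    (hinv : ∀ x ∈ Submodule.span ℂ (Set.range f),
      T x ∈ Submodule.span ℂ (Set.range f)) :
    (∀ n : ℕ, T (f n + f (n + 1)) = f (n + 2)) ↔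
      (T (f 0) + T (f 1) = f 2 ∧
        ∀ n : ℕ, 4 ≤ n → ∀ a : ℕ, ∀ b : ℤ,
          a = (n - 1) / 2 → b = (n : ℤ) - 2 * a - 2 →
          f (n - 1) =
            ∑ i ∈ Finset.Icc a (2 * a),
              ((zbinom ((i : ℤ) + b) (2 * (i : ℤ) - 2 * (a : ℤ) + b) : ℂ) •
                  (T ^ ((i : ℤ) + b).toNat) (f 1) +
               (zbinom ((i : ℤ) + b) (2 * (i : ℤ) - 2 * (a : ℤ) + b + 1) : ℂ) •
                  (T ^ (((i : ℤ) + b).toNat + 1)) (f 0))) :=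
  stmt16_general f T
end

section
/- Let F = {f_n}_{n=1}^∞ be a Bessel sequence with Bessel bound B_F in a complex Hilbert space H, represented by a linear operator T₀ : span{f_n}_{n=1}^∞ → span{f_n}_{n=1}^∞ (so T₀(f_n + f_{n+1}) = f_{n+2} for all n ≥ 1), and let M = {f_n + f_{n+1}}_{n=1}^∞ be a frame for H with lower frame bound A_M. Then ker T_M ⊆ ker T_{F'}, where F' = {f_{n+2}}_{n=1}^∞, if and only if the restriction T of T₀ to span{f_n + f_{n+1}}_{n=1}^∞ is bounded with ‖T‖ ≤ √(B_F / A_M). -/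
/-!
Write `Mₙ = fₙ + fₙ₊₁`. The frame operator `S y = ∑ ⟪Mₙ, y⟫ Mₙ` satisfies `A‖y‖² ≤ re ⟪y, S y⟫`,
so it is onto, and `x = S u` has the expansion `x = ∑ dₙ Mₙ` with `dₙ = ⟪Mₙ, u⟫` and
`‖d‖² = re ⟪u, x⟫ ≤ ‖x‖² / A`. For `x` in the span of `M`, any finite expansion `x = ∑ cₙ Mₙ` gives
`T₀ x = ∑ cₙ fₙ₊₂`; if `ker T_M ⊆ ker T_{F'}`, then `c - d` may be dropped, so
`‖T₀ x‖² = ‖∑ dₙ fₙ₊₂‖² ≤ B ‖d‖² ≤ (B / A) ‖x‖²`. Conversely, if `T₀` is bounded on the span of `M`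
and `∑ cₙ Mₙ = 0`, the partial sums `∑ cₙ fₙ₊₂ = T₀ (∑ cₙ Mₙ)` tend to `0`.
-/

open RCLike

lemma memℓp_two_iff {𝕜 : Type*} [RCLike 𝕜] {c : ℕ → 𝕜} :
    Memℓp c 2 ↔ Summable fun n => ‖c n‖ ^ 2 := by
  rw [memℓp_gen_iff (by norm_num)]
  norm_num

section Coercive

variable {𝕜 E : Type*} [RCLike 𝕜] [NormedAddCommGroup E] [InnerProductSpace 𝕜 E]
  {S : E →L[𝕜] E} {c : ℝ}

lemma ContinuousLinearMap.mul_norm_le_norm_apply_of_coercive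
    (hS : ∀ y, c * ‖y‖ ^ 2 ≤ re (inner 𝕜 y (S y))) (y : E) : c * ‖y‖ ≤ ‖S y‖ := by
  rcases (norm_nonneg y).eq_or_lt with hy | hy
  · simp [← hy]
  refine le_of_mul_le_mul_left ?_ hy
  calc ‖y‖ * (c * ‖y‖) = c * ‖y‖ ^ 2 := by ring
    _ ≤ re (inner 𝕜 y (S y)) := hS y
    _ ≤ ‖y‖ * ‖S y‖ := (re_le_norm _).trans (norm_inner_le_norm _ _)

lemma ContinuousLinearMap.surjective_of_coercive [CompleteSpace E] (hc : 0 < c)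
    (hS : ∀ y, c * ‖y‖ ^ 2 ≤ re (inner 𝕜 y (S y))) : Function.Surjective S := by
  have hanti : AntilipschitzWith (Real.toNNReal c⁻¹) S :=
    S.antilipschitz_of_bound fun y => by
      rw [Real.coe_toNNReal _ (inv_nonneg.2 hc.le), inv_mul_eq_div, le_div_iff₀' hc]
      exact S.mul_norm_le_norm_apply_of_coercive hS y
  have hclosed : IsClosed (LinearMap.range (S : E →ₗ[𝕜] E) : Set E) := by
    rw [LinearMap.coe_range]
    exact hanti.isClosed_range S.uniformContinuous
  have := hclosed.completeSpace_coe
  suffices (LinearMap.range (S : E →ₗ[𝕜] E))ᗮ = ⊥ from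
    LinearMap.range_eq_top.1 (Submodule.orthogonal_eq_bot_iff.1 this)
  refine (Submodule.eq_bot_iff _).2 fun y hy => ?_
  have h0 : inner 𝕜 y (S y) = 0 := by
    rw [← inner_conj_symm, hy (S y) ⟨y, rfl⟩, map_zero]
  by_contra hy0
  have := hS y
  rw [h0, map_zero] at this
  linarith [mul_pos hc (pow_pos (norm_pos_iff.2 hy0) 2)]

end Coercive

section Bessel

variable (𝕜 : Type*) {H : Type*} [RCLike 𝕜] [NormedAddCommGroup H] [InnerProductSpace 𝕜 H]

def IsBesselSequence (g : ℕ → H) (B : ℝ) : Prop :=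
  ∀ x : H, Summable (fun n => ‖(inner 𝕜 x (g n) : 𝕜)‖ ^ 2) ∧
    ∑' n, ‖(inner 𝕜 x (g n) : 𝕜)‖ ^ 2 ≤ B * ‖x‖ ^ 2

variable {𝕜} {g : ℕ → H} {B : ℝ}

namespace IsBesselSequence

lemma comp_injective (hg : IsBesselSequence 𝕜 g B) {e : ℕ → ℕ} (he : e.Injective) :
    IsBesselSequence 𝕜 (g ∘ e) B := fun x =>
  ⟨(hg x).1.comp_injective he,
    (tsum_comp_le_tsum_of_inj (hg x).1 (fun _ => sq_nonneg _) he).trans (hg x).2⟩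

lemma summable_norm_inner_left_sq (hg : IsBesselSequence 𝕜 g B) (y : H) :
    Summable fun n => ‖(inner 𝕜 (g n) y : 𝕜)‖ ^ 2 := by
  simpa only [norm_inner_symm] using (hg y).1

lemma norm_sum_smul_sq_le (hg : IsBesselSequence 𝕜 g B) (hB : 0 ≤ B) (c : ℕ → 𝕜)
    (s : Finset ℕ) : ‖∑ n ∈ s, c n • g n‖ ^ 2 ≤ B * ∑ n ∈ s, ‖c n‖ ^ 2 := by
  set v := ∑ n ∈ s, c n • g n
  have hv : ‖v‖ ^ 2 ≤ ∑ n ∈ s, ‖c n‖ * ‖(inner 𝕜 v (g n) : 𝕜)‖ :=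
    calc ‖v‖ ^ 2 = re (inner 𝕜 v v) := (inner_self_eq_norm_sq (𝕜 := 𝕜) v).symm
      _ ≤ ‖∑ n ∈ s, c n * (inner 𝕜 v (g n) : 𝕜)‖ := by
          simp only [v, inner_sum, inner_smul_right]
          exact re_le_norm _
      _ ≤ ∑ n ∈ s, ‖c n‖ * ‖(inner 𝕜 v (g n) : 𝕜)‖ := by
          simpa only [norm_mul] using norm_sum_le s fun n => c n * (inner 𝕜 v (g n) : 𝕜)
  have hCS := Finset.sum_mul_sq_le_sq_mul_sq s (fun n => ‖c n‖) fun n => ‖(inner 𝕜 v (g n) : 𝕜)‖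
  have hbessel : ∑ n ∈ s, ‖(inner 𝕜 v (g n) : 𝕜)‖ ^ 2 ≤ B * ‖v‖ ^ 2 :=
    ((hg v).1.sum_le_tsum s fun _ _ => sq_nonneg _).trans (hg v).2
  have hc : 0 ≤ ∑ n ∈ s, ‖c n‖ ^ 2 := Finset.sum_nonneg fun _ _ => sq_nonneg _
  rcases (sq_nonneg ‖v‖).eq_or_lt with hv0 | hv0
  · rw [← hv0]; positivity
  · refine le_of_mul_le_mul_right ?_ hv0
    -- Cauchy–Schwarz: `‖v‖⁴ ≤ (∑ ‖cₙ‖ ‖⟪v, gₙ⟫‖)² ≤ (∑ ‖cₙ‖²) · B ‖v‖²`.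
    nlinarith

lemma summable_smul [CompleteSpace H] (hg : IsBesselSequence 𝕜 g B) (hB : 0 ≤ B) {c : ℕ → 𝕜}
    (hc : Summable fun n => ‖c n‖ ^ 2) : Summable fun n => c n • g n := by
  refine summable_iff_vanishing_norm.2 fun ε hε => ?_
  obtain ⟨s, hs⟩ := summable_iff_vanishing_norm.1 hc (ε ^ 2 / (B + 1)) (by positivity)
  refine ⟨s, fun t ht => pow_lt_pow_iff_left₀ (norm_nonneg _) hε.le two_ne_zero |>.1 ?_⟩
  have hct : ∑ n ∈ t, ‖c n‖ ^ 2 < ε ^ 2 / (B + 1) :=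
    (le_abs_self _).trans_lt (Real.norm_eq_abs _ ▸ hs t ht)
  calc ‖∑ n ∈ t, c n • g n‖ ^ 2 ≤ B * ∑ n ∈ t, ‖c n‖ ^ 2 := hg.norm_sum_smul_sq_le hB c t
    _ ≤ (B + 1) * ∑ n ∈ t, ‖c n‖ ^ 2 := by
        gcongr
        linarith
    _ < ε ^ 2 := by rwa [lt_div_iff₀' (by linarith)] at hct

lemma norm_sq_le_of_hasSum (hg : IsBesselSequence 𝕜 g B) (hB : 0 ≤ B) {c : ℕ → 𝕜} {x : H}
    (hx : HasSum (fun n => c n • g n) x) (hc : Summable fun n => ‖c n‖ ^ 2) :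
    ‖x‖ ^ 2 ≤ B * ∑' n, ‖c n‖ ^ 2 :=
  le_of_tendsto' (hx.norm.pow 2) fun s =>
    (hg.norm_sum_smul_sq_le hB c s).trans <|
      mul_le_mul_of_nonneg_left (hc.sum_le_tsum s fun _ _ => sq_nonneg _) hB

variable [CompleteSpace H]

lemma hasSum_inner_smul (hg : IsBesselSequence 𝕜 g B) (hB : 0 ≤ B) (y : H) :
    HasSum (fun n => inner 𝕜 (g n) y • g n) (∑' n, inner 𝕜 (g n) y • g n) :=
  (hg.summable_smul hB (hg.summable_norm_inner_left_sq y)).hasSum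

lemma norm_tsum_inner_smul_le (hg : IsBesselSequence 𝕜 g B) (hB : 0 ≤ B) (y : H) :
    ‖∑' n, inner 𝕜 (g n) y • g n‖ ≤ B * ‖y‖ := by
  refine abs_le_of_sq_le_sq' ?_ (by positivity) |>.2
  calc ‖∑' n, inner 𝕜 (g n) y • g n‖ ^ 2
      ≤ B * ∑' n, ‖(inner 𝕜 (g n) y : 𝕜)‖ ^ 2 :=
        hg.norm_sq_le_of_hasSum hB (hg.hasSum_inner_smul hB y) (hg.summable_norm_inner_left_sq y)
    _ ≤ B * (B * ‖y‖ ^ 2) := by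
        simp only [norm_inner_symm (g _) y]
        exact mul_le_mul_of_nonneg_left (hg y).2 hB
    _ = (B * ‖y‖) ^ 2 := by ring

noncomputable def frameOperator (hg : IsBesselSequence 𝕜 g B) (hB : 0 ≤ B) : H →L[𝕜] H :=
  LinearMap.mkContinuous
    { toFun := fun y => ∑' n, inner 𝕜 (g n) y • g n
      map_add' := fun y z => by
        simpa only [inner_add_right, add_smul] using
          ((hg.hasSum_inner_smul hB y).add (hg.hasSum_inner_smul hB z)).tsum_eq
      map_smul' := fun a y => by
        simpa only [inner_smul_right, mul_smul, RingHom.id_apply] using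
          ((hg.hasSum_inner_smul hB y).const_smul a).tsum_eq }
    B (hg.norm_tsum_inner_smul_le hB)

lemma hasSum_frameOperator (hg : IsBesselSequence 𝕜 g B) (hB : 0 ≤ B) (y : H) :
    HasSum (fun n => inner 𝕜 (g n) y • g n) (hg.frameOperator hB y) :=
  hg.hasSum_inner_smul hB y

lemma re_inner_frameOperator_self (hg : IsBesselSequence 𝕜 g B) (hB : 0 ≤ B) (y : H) :
    re (inner 𝕜 y (hg.frameOperator hB y)) = ∑' n, ‖(inner 𝕜 y (g n) : 𝕜)‖ ^ 2 := by
  refine (RCLike.hasSum_re 𝕜 ((innerSL 𝕜 y).hasSum (hg.hasSum_frameOperator hB y))).unique ?_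
  convert (hg y).1.hasSum using 2 with n
  rw [innerSL_apply_apply, inner_smul_right, ← inner_conj_symm (g n) y, RCLike.conj_mul]
  norm_cast

lemma exists_expansion_of_lower_frame_bound (hg : IsBesselSequence 𝕜 g B) (hB : 0 ≤ B) {A : ℝ}
    (hA : 0 < A) (hlow : ∀ x : H, A * ‖x‖ ^ 2 ≤ ∑' n, ‖(inner 𝕜 x (g n) : 𝕜)‖ ^ 2) (x : H) :
    ∃ d : ℕ → 𝕜, Summable (fun n => ‖d n‖ ^ 2) ∧ HasSum (fun n => d n • g n) x ∧
      ∑' n, ‖d n‖ ^ 2 ≤ ‖x‖ ^ 2 / A := by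
  set S := hg.frameOperator hB
  have hS : ∀ y, A * ‖y‖ ^ 2 ≤ re (inner 𝕜 y (S y)) := fun y =>
    (hg.re_inner_frameOperator_self hB y).symm ▸ hlow y
  obtain ⟨u, rfl⟩ := S.surjective_of_coercive hA hS x
  refine ⟨fun n => inner 𝕜 (g n) u, hg.summable_norm_inner_left_sq u,
    hg.hasSum_frameOperator hB u, ?_⟩
  have hu : ‖u‖ ≤ ‖S u‖ / A := by
    rw [le_div_iff₀' hA]; exact S.mul_norm_le_norm_apply_of_coercive hS u
  calc ∑' n, ‖(inner 𝕜 (g n) u : 𝕜)‖ ^ 2 = re (inner 𝕜 u (S u)) := by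
        simp only [norm_inner_symm (g _) u]
        exact (hg.re_inner_frameOperator_self hB u).symm
    _ ≤ ‖u‖ * ‖S u‖ := (re_le_norm _).trans (norm_inner_le_norm _ _)
    _ ≤ ‖S u‖ / A * ‖S u‖ := by gcongr
    _ = ‖S u‖ ^ 2 / A := by ring

end IsBesselSequence

end Bessel

section Span

variable {𝕜 E F : Type*} [NormedField 𝕜] [NormedAddCommGroup E] [NormedSpace 𝕜 E]
  [NormedAddCommGroup F] [NormedSpace 𝕜 F] {M : ℕ → E} {N : ℕ → F}

lemma LinearMap.exists_finite_expansion_of_mem_span (T : E →ₗ[𝕜] F) (hT : ∀ n, T (M n) = N n)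
    {x : E} (hx : x ∈ Submodule.span 𝕜 (Set.range M)) :
    ∃ c : ℕ → 𝕜, Summable (fun n => ‖c n‖ ^ 2) ∧ HasSum (fun n => c n • M n) x ∧
      HasSum (fun n => c n • N n) (T x) := by
  obtain ⟨c, rfl⟩ := Finsupp.mem_span_range_iff_exists_finsupp.1 hx
  have hc : ∀ n ∉ c.support, c n = 0 := fun n => Finsupp.notMem_support_iff.1
  refine ⟨c, summable_of_ne_finset_zero (s := c.support) fun n hn => by simp [hc n hn],
    hasSum_sum_of_ne_finset_zero fun n hn => by simp [hc n hn], ?_⟩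
  rw [Finsupp.sum, map_sum]
  simp only [map_smul, hT]
  exact hasSum_sum_of_ne_finset_zero fun n hn => by simp [hc n hn]

lemma LinearMap.hasSum_zero_of_norm_le_on_span (T : E →ₗ[𝕜] F) (hT : ∀ n, T (M n) = N n)
    {K : ℝ} (hK : ∀ x ∈ Submodule.span 𝕜 (Set.range M), ‖T x‖ ≤ K * ‖x‖) {c : ℕ → 𝕜}
    (hc : HasSum (fun n => c n • M n) 0) : HasSum (fun n => c n • N n) 0 := by
  refine squeeze_zero_norm (fun s => ?_) (by simpa using hc.norm.const_mul K)
  have hmem : ∑ n ∈ s, c n • M n ∈ Submodule.span 𝕜 (Set.range M) :=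
    Submodule.sum_mem _ fun n _ => Submodule.smul_mem _ _ (Submodule.subset_span ⟨n, rfl⟩)
  simpa only [map_sum, map_smul, hT] using hK _ hmem

end Span

theorem stmt17_general {H : Type*} [NormedAddCommGroup H] [InnerProductSpace ℂ H]
    [CompleteSpace H] (f : ℕ → H) (B A : ℝ) (hB : 0 < B) (hA : 0 < A)
    -- `F` is a Bessel sequence with Bessel bound `B`:
    (hF : ∀ x : H, Summable (fun n => ‖(inner ℂ x (f n) : ℂ)‖ ^ 2) ∧
      ∑' n, ‖(inner ℂ x (f n) : ℂ)‖ ^ 2 ≤ B * ‖x‖ ^ 2)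
    -- `M = {fₙ + fₙ₊₁}` is a frame with lower frame bound `A`:
    (hM : ∃ B' : ℝ, 0 < B' ∧ ∀ x : H,
      Summable (fun n => ‖(inner ℂ x (f n + f (n + 1)) : ℂ)‖ ^ 2) ∧
      A * ‖x‖ ^ 2 ≤ ∑' n, ‖(inner ℂ x (f n + f (n + 1)) : ℂ)‖ ^ 2 ∧
      ∑' n, ‖(inner ℂ x (f n + f (n + 1)) : ℂ)‖ ^ 2 ≤ B' * ‖x‖ ^ 2)
    -- `T₀` represents `F`:
    (T₀ : H →ₗ[ℂ] H)
    (hrep : ∀ n : ℕ, T₀ (f n + f (n + 1)) = f (n + 2)) :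
    synthKer (fun n => f n + f (n + 1)) ⊆ synthKer (fun n => f (n + 2)) ↔
      ∀ x ∈ Submodule.span ℂ (Set.range (fun n => f n + f (n + 1))),
        ‖T₀ x‖ ≤ Real.sqrt (B / A) * ‖x‖ := by
  obtain ⟨B', hB', hframe⟩ := hM
  have hMbessel : IsBesselSequence ℂ (fun n => f n + f (n + 1)) B' := fun x =>
    ⟨(hframe x).1, (hframe x).2.2⟩
  have hF' : IsBesselSequence ℂ (fun n => f (n + 2)) B :=
    IsBesselSequence.comp_injective hF (add_left_injective 2)
  refine ⟨fun hker x hx => ?_, fun hbound c ⟨hc, hcM⟩ =>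
    ⟨hc, T₀.hasSum_zero_of_norm_le_on_span hrep hbound hcM⟩⟩
  obtain ⟨c, hc, hcM, hcF⟩ := T₀.exists_finite_expansion_of_mem_span hrep hx
  obtain ⟨d, hd, hdM, hdle⟩ := hMbessel.exists_expansion_of_lower_frame_bound hB'.le hA
    (fun y => (hframe y).2.1) x
  have hdF : HasSum (fun n => d n • f (n + 2)) (T₀ x) := by
    have hcd := (hker ⟨memℓp_two_iff.2 hc |>.sub (memℓp_two_iff.2 hd),
      by simpa only [Pi.sub_apply, sub_smul, sub_self] using hcM.sub hdM⟩).2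
    simpa only [Pi.sub_apply, sub_smul, sub_sub_cancel, sub_zero] using hcF.sub hcd
  have hsq : ‖T₀ x‖ ^ 2 ≤ B / A * ‖x‖ ^ 2 :=
    calc ‖T₀ x‖ ^ 2 ≤ B * ∑' n, ‖d n‖ ^ 2 := hF'.norm_sq_le_of_hasSum hB.le hdF hd
      _ ≤ B * (‖x‖ ^ 2 / A) := by gcongr
      _ = B / A * ‖x‖ ^ 2 := by ring
  calc ‖T₀ x‖ = Real.sqrt (‖T₀ x‖ ^ 2) := (Real.sqrt_sq (norm_nonneg _)).symm
    _ ≤ Real.sqrt (B / A * ‖x‖ ^ 2) := Real.sqrt_le_sqrt hsq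
    _ = Real.sqrt (B / A) * ‖x‖ := by
        rw [Real.sqrt_mul' _ (sq_nonneg _), Real.sqrt_sq (norm_nonneg _)]

theorem stmt17 {H : Type*} [NormedAddCommGroup H] [InnerProductSpace ℂ H]
    [CompleteSpace H] (f : ℕ → H) (B A : ℝ) (hB : 0 < B) (hA : 0 < A)
    -- `F` is a Bessel sequence with Bessel bound `B`:
    (hF : ∀ x : H, Summable (fun n => ‖(inner ℂ x (f n) : ℂ)‖ ^ 2) ∧
      ∑' n, ‖(inner ℂ x (f n) : ℂ)‖ ^ 2 ≤ B * ‖x‖ ^ 2)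
    -- `M = {fₙ + fₙ₊₁}` is a frame with lower frame bound `A`:
    (hM : ∃ B' : ℝ, 0 < B' ∧ ∀ x : H,
      Summable (fun n => ‖(inner ℂ x (f n + f (n + 1)) : ℂ)‖ ^ 2) ∧
      A * ‖x‖ ^ 2 ≤ ∑' n, ‖(inner ℂ x (f n + f (n + 1)) : ℂ)‖ ^ 2 ∧
      ∑' n, ‖(inner ℂ x (f n + f (n + 1)) : ℂ)‖ ^ 2 ≤ B' * ‖x‖ ^ 2)
    -- `T₀` represents `F`:
    (T₀ : H →ₗ[ℂ] H)
    (hinv : ∀ x ∈ Submodule.span ℂ (Set.range f),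
      T₀ x ∈ Submodule.span ℂ (Set.range f))
    (hrep : ∀ n : ℕ, T₀ (f n + f (n + 1)) = f (n + 2)) :
    synthKer (fun n => f n + f (n + 1)) ⊆ synthKer (fun n => f (n + 2)) ↔
      ∀ x ∈ Submodule.span ℂ (Set.range (fun n => f n + f (n + 1))),
        ‖T₀ x‖ ≤ Real.sqrt (B / A) * ‖x‖ :=
  stmt17_general f B A hB hA hF hM T₀ hrep
end
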